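/- arXiv:1007.3920 — 4 statements merged into one kernel-verified Lean document; each statement's English description precedes it below -/
import Mathlib

section
/- Let n ≥ 1 and let g, h ∈ SU(2) and real phases φ, θ satisfy e^{iφ} g^{⊗n} = e^{iθ} h^{⊗n} as operators on (ℂ²)^{⊗n}. Then g = h or g = −h. -/
open Matrix BigOperators

noncomputable section

/-- An `n`-qubit state vector in `(ℂ²)^⊗n`, indexed by bit strings. -/
abbrev QState (n : ℕ) := (Fin n → Bool) → ℂ

/-- Tensor product of one-qubit matrices, as a matrix on `(ℂ²)^⊗n`. -/
def tens {n : ℕ} (M : Fin n → Matrix Bool Bool ℂ) :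
    Matrix (Fin n → Bool) (Fin n → Bool) ℂ :=
  fun I J => ∏ k, M k (I k) (J k)

/-- A one-qubit operator `M` acting on the `k`-th tensor factor. -/
def op1 {n : ℕ} (M : Matrix Bool Bool ℂ) (k : Fin n) :
    Matrix (Fin n → Bool) (Fin n → Bool) ℂ :=
  tens (fun j => if j = k then M else 1)

/-- Pauli X. -/
def PX : Matrix Bool Bool ℂ := fun a b => if a = b then 0 else 1

/-- Pauli Y. -/
def PY : Matrix Bool Bool ℂ :=
  fun a b => if a = b then 0 else (if b then -Complex.I else Complex.I)

/-- Pauli Z. -/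
def PZ : Matrix Bool Bool ℂ :=
  fun a b => if a = b then (if a then -1 else 1) else 0

/-- Hamming weight of a bit string. -/
def wt {n : ℕ} (I : Fin n → Bool) : ℕ :=
  (Finset.univ.filter fun k => I k = true).card

/-- The (unnormalized) Dicke state `|D_n^(k)⟩ = ∑_{wt I = k} |I⟩`. -/
def dicke (n k : ℕ) : QState n := fun I => if wt I = k then 1 else 0

/-- Computational basis vector `|I⟩`. -/
def ket {n : ℕ} (I : Fin n → Bool) : QState n := fun J => if J = I then 1 else 0

/-- Action of a permutation of the tensor factors on a state. -/
def permAct {n : ℕ} (σ : Equiv.Perm (Fin n)) (ψ : QState n) : QState n :=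
  fun I => ψ (I ∘ σ)

/-- The singlet state `|01⟩ - |10⟩` in `ℂ² ⊗ ℂ²`. -/
def singlet : QState 2 := fun I =>
  if I 0 = false ∧ I 1 = true then 1
  else if I 0 = true ∧ I 1 = false then -1 else 0

/-- `σ` encodes a perfect matching: a fixed-point-free involution. -/
def isMatching {n : ℕ} (σ : Equiv.Perm (Fin n)) : Prop :=
  (∀ k, σ k ≠ k) ∧ (∀ k, σ (σ k) = k)

/-- The matching encoded by `σ` is noncrossing. -/
def noncross {n : ℕ} (σ : Equiv.Perm (Fin n)) : Prop :=
  ¬ ∃ a c, a < c ∧ c < σ a ∧ σ a < σ c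

/-- The product of singlets `|s_P⟩` over the blocks of the matching `σ`:
the coefficient on `|I⟩` is nonzero iff every block joins a 0 to a 1,
and the sign is the product over blocks of `-1` if the smaller element
carries bit 1. -/
def sP {n : ℕ} (σ : Equiv.Perm (Fin n)) : QState n := fun I =>
  if ∀ k, I (σ k) = !(I k) then
    ∏ k ∈ Finset.univ.filter (fun k => k < σ k), (if I k then (-1 : ℂ) else 1)
  else 0

/-- The bit string `I_P`: 0 on the smaller and 1 on the larger element of
each block of the matching `σ`. -/
def IP {n : ℕ} (σ : Equiv.Perm (Fin n)) : Fin n → Bool := fun k => decide (σ k < k)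

/-- If `e^{iφ} g^{⊗n} = e^{iθ} h^{⊗n}` for `g, h ∈ SU(2)` and
`n ≥ 1`, then `g = h` or `g = -h`. -/
theorem tensor_power_projective (n : ℕ) (hn : 1 ≤ n)
    (g h : Matrix Bool Bool ℂ)
    (hg : g ∈ Matrix.unitaryGroup Bool ℂ) (hgdet : g.det = 1)
    (hh : h ∈ Matrix.unitaryGroup Bool ℂ) (hhdet : h.det = 1)
    (φ θ : ℝ)
    (heq : Complex.exp (Complex.I * (φ : ℂ)) • tens (fun _ : Fin n => g) =
      Complex.exp (Complex.I * (θ : ℂ)) • tens (fun _ : Fin n => h)) :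
    g = h ∨ g = -h := by
  obtain ⟨m, rfl⟩ : ∃ m, n = m + 1 := ⟨n - 1, by omega⟩
  set eφ := Complex.exp (Complex.I * (φ : ℂ)) with heφ
  set eθ := Complex.exp (Complex.I * (θ : ℂ)) with heθ
  have heφ0 : eφ ≠ 0 := Complex.exp_ne_zero _
  have heθ0 : eθ ≠ 0 := Complex.exp_ne_zero _
  have key : ∀ A B : Fin (m + 1) → Bool,
      eφ * ∏ k, g (A k) (B k) = eθ * ∏ k, h (A k) (B k) := by
    intro A B
    have := congrFun (congrFun heq A) B
    simpa [tens, Matrix.smul_apply, smul_eq_mul] using this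
  have hne : ∃ a b, h a b ≠ 0 := by
    by_contra hc
    push_neg at hc
    have hz : h = 0 := by ext a b; exact hc a b
    rw [hz] at hhdet
    simp at hhdet
  obtain ⟨a₀, b₀, h₀ne⟩ := hne
  -- constant strings
  have eq0 : eφ * g a₀ b₀ ^ (m + 1) = eθ * h a₀ b₀ ^ (m + 1) := by
    have := key (fun _ => a₀) (fun _ => b₀)
    simpa [Finset.prod_const] using this
  have g₀ne : g a₀ b₀ ≠ 0 := by
    intro hz
    rw [hz] at eq0
    simp only [zero_pow (Nat.succ_ne_zero m), mul_zero] at eq0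
    exact (mul_ne_zero heθ0 (pow_ne_zero _ h₀ne)) eq0.symm
  -- strings differing in one coordinate
  have eqab : ∀ a b, eφ * (g a b * g a₀ b₀ ^ m) = eθ * (h a b * h a₀ b₀ ^ m) := by
    intro a b
    have := key (Fin.cons a (fun _ => a₀)) (Fin.cons b (fun _ => b₀))
    simpa [Fin.prod_univ_succ, Finset.prod_const] using this
  have main : ∀ a b, g a b * h a₀ b₀ = h a b * g a₀ b₀ := by
    intro a b
    have h1 : eφ * (g a b * g a₀ b₀ ^ m) * h a₀ b₀
        = eθ * (h a b * h a₀ b₀ ^ m) * h a₀ b₀ := by rw [eqab a b]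
    have h2 : eθ * (h a b * h a₀ b₀ ^ m) * h a₀ b₀
        = h a b * (eθ * h a₀ b₀ ^ (m + 1)) := by ring
    have h3 : h a b * (eθ * h a₀ b₀ ^ (m + 1)) = h a b * (eφ * g a₀ b₀ ^ (m + 1)) := by
      rw [← eq0]
    have h4 : (eφ * g a₀ b₀ ^ m) * (g a b * h a₀ b₀)
        = (eφ * g a₀ b₀ ^ m) * (h a b * g a₀ b₀) := by
      have := h1.trans (h2.trans h3)
      calc (eφ * g a₀ b₀ ^ m) * (g a b * h a₀ b₀)
          = eφ * (g a b * g a₀ b₀ ^ m) * h a₀ b₀ := by ring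
        _ = h a b * (eφ * g a₀ b₀ ^ (m + 1)) := this
        _ = (eφ * g a₀ b₀ ^ m) * (h a b * g a₀ b₀) := by ring
    exact mul_left_cancel₀ (mul_ne_zero heφ0 (pow_ne_zero _ g₀ne)) h4
  set l : ℂ := g a₀ b₀ / h a₀ b₀ with hl
  have hglh : g = l • h := by
    ext a b
    simp only [Matrix.smul_apply, smul_eq_mul, hl]
    field_simp
    rw [main a b]; ring
  have hdet : l ^ 2 = 1 := by
    have := hgdet
    rw [hglh, Matrix.det_smul] at this
    simpa [hhdet, Fintype.card_bool] using this
  have : (l - 1) * (l + 1) = 0 := by ring_nf; linear_combination hdet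
  rcases mul_eq_zero.mp this with h1 | h1
  · left
    have : l = 1 := by linear_combination h1
    rw [hglh, this, one_smul]
  · right
    have : l = -1 := by linear_combination h1
    rw [hglh, this, neg_one_smul]
end
end

section
/- Let h ∈ SU(2) be diagonal, h = diag(e^{it}, e^{−it}), let i ≠ j be qubit positions, and let |ψ⟩ ∈ (ℂ²)^{⊗n} be a state fixed by h^{(i)} (h†)^{(j)}. If there exists a bit string I with nonzero coefficient in |ψ⟩ whose i-th and j-th bits are different, then h = Id or h = −Id. -/
open Matrix BigOperators

noncomputable section

/-- If a diagonal `h = diag(e^{it}, e^{-it}) ∈ SU(2)` satisfies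
`h^{(i)} (h†)^{(j)} |ψ⟩ = |ψ⟩` and some basis vector with differing `i`-th
and `j`-th bits has nonzero coefficient in `|ψ⟩`, then `h = ±Id`. -/
theorem diagonal_stabilizer_forces_pm_id (n : ℕ) (t : ℝ)
    (h : Matrix Bool Bool ℂ)
    (hdiag : h = Matrix.diagonal (fun b : Bool =>
      if b then Complex.exp (-(Complex.I * (t : ℂ)))
      else Complex.exp (Complex.I * (t : ℂ))))
    (i j : Fin n) (hij : i ≠ j) (ψ : QState n)
    (hfix : (tens (fun k => if k = i then h else if k = j then hᴴ else 1)).mulVec ψ = ψ)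
    (hsupp : ∃ I : Fin n → Bool, ψ I ≠ 0 ∧ I i ≠ I j) :
    h = 1 ∨ h = -1 := by
  obtain ⟨I, hI, hIij⟩ := hsupp
  set z : ℂ := Complex.exp (Complex.I * (t : ℂ)) with hz
  have hzinv : Complex.exp (-(Complex.I * (t : ℂ))) = z⁻¹ := by
    rw [hz, Complex.exp_neg]
  have hconjz : (starRingEnd ℂ) z = z⁻¹ := by
    rw [hz, ← Complex.exp_conj, _root_.map_mul, Complex.conj_I, Complex.conj_ofReal,
      neg_mul, Complex.exp_neg]
  have hzne : z ≠ 0 := Complex.exp_ne_zero _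
  set d : Fin n → Bool → ℂ := fun k b =>
    if k = i then (if b then z⁻¹ else z)
    else if k = j then (if b then z else z⁻¹) else 1 with hd
  have hM : ∀ k : Fin n,
      (if k = i then h else if k = j then hᴴ else 1) = Matrix.diagonal (d k) := by
    intro k
    by_cases hki : k = i
    · simp only [hki, if_pos rfl, hd, hdiag]
      congr 1
      funext b
      cases b <;> simp [hzinv, hz]
    · by_cases hkj : k = j
      · rw [if_neg hki, if_pos hkj, hdiag]
        ext a b
        rw [Matrix.conjTranspose_apply]
        cases a <;> cases b <;>
          simp [hd, hki, hkj, Ne.symm hij, Matrix.diagonal_apply, hzinv, hconjz,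
            Complex.star_def, map_inv₀, inv_inv]
      · simp [hki, hkj, hd, Matrix.diagonal_one]
  have key := congrFun hfix I
  have hlhs : (tens fun k => if k = i then h else if k = j then hᴴ else 1).mulVec ψ I
      = (∏ k, d k (I k)) * ψ I := by
    rw [Matrix.mulVec, dotProduct]
    rw [Finset.sum_eq_single I]
    · congr 1
      simp only [tens]
      refine Finset.prod_congr rfl fun k _ => ?_
      rw [hM k, Matrix.diagonal_apply_eq]
    · intro J _ hJ
      have : ∃ k, I k ≠ J k := by
        by_contra hc
        push_neg at hc
        exact hJ (funext fun k => (hc k).symm)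
      obtain ⟨k, hk⟩ := this
      have : tens (fun k => if k = i then h else if k = j then hᴴ else 1) I J = 0 := by
        simp only [tens]
        refine Finset.prod_eq_zero (Finset.mem_univ k) ?_
        rw [hM k, Matrix.diagonal_apply_ne _ hk]
      rw [this, zero_mul]
    · intro hIu; exact absurd (Finset.mem_univ I) hIu
  rw [hlhs] at key
  have hprod : (∏ k, d k (I k)) = 1 := by
    by_contra hne
    have := mul_right_cancel₀ hI (key.trans (one_mul (ψ I)).symm)
    exact hne this
  have hpair : (∏ k, d k (I k)) = d i (I i) * d j (I j) := by
    rw [← Finset.prod_subset (Finset.subset_univ ({i, j} : Finset (Fin n)))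
      (fun k _ hk => ?_)]
    · rw [Finset.prod_pair hij]
    · simp only [Finset.mem_insert, Finset.mem_singleton, not_or] at hk
      simp [hd, hk.1, hk.2]
  rw [hpair] at hprod
  have hzz : z * z = 1 := by
    rcases Bool.eq_false_or_eq_true (I i) with hi' | hi' <;>
      rcases Bool.eq_false_or_eq_true (I j) with hj' | hj'
    · exact absurd (hi'.trans hj'.symm) hIij
    · have : z⁻¹ * z⁻¹ = 1 := by simpa [hd, hij, Ne.symm hij, hi', hj'] using hprod
      rw [← mul_inv, inv_eq_one] at this
      exact this
    · simpa [hd, hij, Ne.symm hij, hi', hj'] using hprod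
    · exact absurd (hi'.trans hj'.symm) hIij
  have hz1 : z = 1 ∨ z = -1 := mul_self_eq_one_iff.mp hzz
  rcases hz1 with h1 | h1
  · left
    rw [hdiag]
    ext a b
    cases a <;> cases b <;>
      simp [hzinv, h1, Matrix.one_apply, Matrix.diagonal_apply]
  · right
    rw [hdiag]
    ext a b
    cases a <;> cases b <;>
      simp [hzinv, h1, Matrix.one_apply, Matrix.neg_apply, Matrix.diagonal_apply, inv_neg_one]
end
end

section
/- Let n = 2m with m even, and let Î be the bit string 0^{m−1} 1 0 1^{m−1} (m−1 zeros, a one, a zero, then m−1 ones). Then there are exactly two noncrossing perfect matchings P of {1,...,n} such that every block of P joins a position where Î is 0 to a position where Î is 1 (equivalently, such that |Î⟩ has nonzero coefficient in |s_P⟩). -/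
open Matrix BigOperators

noncomputable section

def mv0 (m j : ℕ) : ℕ := 2*m - 1 - j

def mv1 (m j : ℕ) : ℕ :=
  if j = m-2 then m-1 else if j = m-1 then m-2 else if j = m then m+1
  else if j = m+1 then m else 2*m-1-j

lemma mv0_lt (m j : ℕ) (_h2 : 2 ≤ m) (hj : j < 2*m) : mv0 m j < 2*m := by
  unfold mv0; omega

lemma mv0_inv (m j : ℕ) (_h2 : 2 ≤ m) (hj : j < 2*m) : mv0 m (mv0 m j) = j := by
  unfold mv0; omega

lemma mv1_lt (m j : ℕ) (h2 : 2 ≤ m) (hj : j < 2*m) : mv1 m j < 2*m := by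
  unfold mv1; split_ifs <;> omega

lemma mv1_inv (m j : ℕ) (h2 : 2 ≤ m) (hj : j < 2*m) : mv1 m (mv1 m j) = j := by
  unfold mv1; split_ifs <;> omega

def mperm0 (m : ℕ) (h2 : 2 ≤ m) : Equiv.Perm (Fin (2*m)) :=
  Function.Involutive.toPerm (fun k => ⟨mv0 m k.1, mv0_lt m k.1 h2 k.2⟩)
    (fun k => Fin.ext (mv0_inv m k.1 h2 k.2))

def mperm1 (m : ℕ) (h2 : 2 ≤ m) : Equiv.Perm (Fin (2*m)) :=
  Function.Involutive.toPerm (fun k => ⟨mv1 m k.1, mv1_lt m k.1 h2 k.2⟩)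
    (fun k => Fin.ext (mv1_inv m k.1 h2 k.2))

lemma mperm0_val (m : ℕ) (h2 : 2 ≤ m) (k : Fin (2*m)) :
    (mperm0 m h2 k).val = mv0 m k.1 := rfl

lemma mperm1_val (m : ℕ) (h2 : 2 ≤ m) (k : Fin (2*m)) :
    (mperm1 m h2 k).val = mv1 m k.1 := rfl

lemma mperm0_good (m : ℕ) (h2 : 2 ≤ m) (Ihat : Fin (2 * m) → Bool)
    (hI : ∀ k : Fin (2 * m),
      Ihat k = decide ((k : ℕ) = m - 1 ∨ m + 1 ≤ (k : ℕ))) :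
    isMatching (mperm0 m h2) ∧ noncross (mperm0 m h2) ∧
      ∀ k, Ihat (mperm0 m h2 k) = !(Ihat k) := by
  refine ⟨⟨?_, ?_⟩, ?_, ?_⟩
  · intro k hk
    have h := congrArg Fin.val hk
    rw [mperm0_val] at h
    have := k.2
    unfold mv0 at h; omega
  · intro k
    apply Fin.ext
    rw [mperm0_val, mperm0_val]
    exact mv0_inv m k.1 h2 k.2
  · rintro ⟨a, c, h1, h2', h3⟩
    rw [Fin.lt_def] at h1 h2' h3
    rw [mperm0_val] at h2' h3
    rw [mperm0_val] at h3
    have := a.2; have := c.2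
    unfold mv0 at h2' h3; omega
  · intro k
    rw [hI, hI, ← decide_not]
    apply decide_eq_decide.mpr
    rw [mperm0_val]
    have := k.2
    unfold mv0; omega

lemma mperm1_good (m : ℕ) (h2 : 2 ≤ m) (Ihat : Fin (2 * m) → Bool)
    (hI : ∀ k : Fin (2 * m),
      Ihat k = decide ((k : ℕ) = m - 1 ∨ m + 1 ≤ (k : ℕ))) :
    isMatching (mperm1 m h2) ∧ noncross (mperm1 m h2) ∧
      ∀ k, Ihat (mperm1 m h2 k) = !(Ihat k) := by
  refine ⟨⟨?_, ?_⟩, ?_, ?_⟩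
  · intro k hk
    have h := congrArg Fin.val hk
    rw [mperm1_val] at h
    have := k.2
    unfold mv1 at h; split_ifs at h <;> omega
  · intro k
    apply Fin.ext
    rw [mperm1_val, mperm1_val]
    exact mv1_inv m k.1 h2 k.2
  · rintro ⟨a, c, h1, h2', h3⟩
    rw [Fin.lt_def] at h1 h2' h3
    rw [mperm1_val] at h2' h3
    rw [mperm1_val] at h3
    have := a.2; have := c.2
    unfold mv1 at h2' h3; split_ifs at h2' h3 <;> omega
  · intro k
    rw [hI, hI, ← decide_not]
    apply decide_eq_decide.mpr
    rw [mperm1_val]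
    have := k.2
    unfold mv1; split_ifs <;> omega

lemma chain_low (g : ℕ → ℕ) (b L : ℕ) (hmono : ∀ k, k < b → g (k+1) < g k)
    (hb : L ≤ g b) : ∀ k, k ≤ b → L + b ≤ g k + k := by
  have H : ∀ d k, k + d = b → L + b ≤ g k + k := by
    intro d
    induction d with
    | zero =>
      intro k hk
      have : k = b := by omega
      subst this; omega
    | succ d ih =>
      intro k hk
      have h1 := hmono k (by omega)
      have h2 := ih (k+1) (by omega)
      omega
  intro k hk; exact H (b - k) k (by omega)

lemma chain_high (g : ℕ → ℕ) (b U : ℕ) (hmono : ∀ k, k < b → g (k+1) < g k)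
    (h0 : g 0 ≤ U) : ∀ k, k ≤ b → g k + k ≤ U := by
  intro k hk
  induction k with
  | zero => omega
  | succ d ih =>
    have h1 := hmono d (by omega)
    have h2 := ih (by omega)
    omega

lemma forced (m : ℕ) (h2 : 2 ≤ m) (Ihat : Fin (2 * m) → Bool)
    (hI : ∀ k : Fin (2 * m),
      Ihat k = decide ((k : ℕ) = m - 1 ∨ m + 1 ≤ (k : ℕ)))
    (σ : Equiv.Perm (Fin (2 * m)))
    (hfix : ∀ k, σ k ≠ k) (hinv : ∀ k, σ (σ k) = k)
    (hnc : noncross σ) (hbit : ∀ k, Ihat (σ k) = !(Ihat k)) :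
    (∀ k : Fin (2*m), (σ k).val = 2*m - 1 - k.val) ∨
    ((σ ⟨m-1, by omega⟩).val = m - 2 ∧ (σ ⟨m, by omega⟩).val = m + 1 ∧
      ∀ k : Fin (2*m), k.val + 3 ≤ m → (σ k).val = 2*m - 1 - k.val) := by
  have hb1 : m - 1 < 2*m := by omega
  have hb2 : m - 2 < 2*m := by omega
  have hb3 : m < 2*m := by omega
  have hb4 : m + 1 < 2*m := by omega
  -- bit condition in arithmetic form
  have hbitN : ∀ (j : ℕ) (hj : j < 2*m),
      ((σ ⟨j, hj⟩).val = m-1 ∨ m+1 ≤ (σ ⟨j, hj⟩).val) ↔ ¬(j = m-1 ∨ m+1 ≤ j) := by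
    intro j hj
    have h := hbit ⟨j, hj⟩
    rw [hI, hI, ← decide_not] at h
    exact decide_eq_decide.mp h
  have cross : ∀ a c : Fin (2*m), a.val < c.val → c.val < (σ a).val →
      (σ a).val < (σ c).val → False := by
    intro a c u1 u2 u3
    exact hnc ⟨a, c, Fin.lt_def.mpr u1, Fin.lt_def.mpr u2, Fin.lt_def.mpr u3⟩
  -- the partner of m-1 is m-2 or m
  have hM1 := hbitN (m-1) hb1
  have hM1lt := (σ ⟨m-1, hb1⟩).2
  have hM1cases : (σ ⟨m-1, hb1⟩).val ≤ m - 2 ∨ (σ ⟨m-1, hb1⟩).val = m := by omega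
  by_cases hcase : (σ ⟨m-1, hb1⟩).val = m
  · -- CASE A : rainbow
    left
    have eA : σ ⟨m-1, hb1⟩ = ⟨m, hb3⟩ := Fin.ext hcase
    have eA' : σ ⟨m, hb3⟩ = ⟨m-1, hb1⟩ := by
      rw [← eA, hinv]
    set g : ℕ → ℕ := fun j => if h : j < 2*m then (σ ⟨j, h⟩).val else 0 with hg
    have hgval : ∀ j (h : j < 2*m), g j = (σ ⟨j, h⟩).val := by
      intro j h; rw [hg]; simp [h]
    have hone : ∀ j, j ≤ m - 2 → m + 1 ≤ g j := by
      intro j hj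
      have hjlt : j < 2*m := by omega
      rw [hgval j hjlt]
      have hb := hbitN j hjlt
      have hne : (σ ⟨j, hjlt⟩).val ≠ m - 1 := by
        intro hEq
        have e1 : σ ⟨j, hjlt⟩ = ⟨m-1, hb1⟩ := Fin.ext hEq
        rw [← eA'] at e1
        have e3 : (j : ℕ) = m := congrArg Fin.val (σ.injective e1)
        omega
      omega
    have hmono : ∀ j, j < m - 2 → g (j+1) < g j := by
      intro j hj
      have hjlt : j < 2*m := by omega
      have hj1lt : j + 1 < 2*m := by omega
      have e1 := hgval j hjlt
      have e2 := hgval (j+1) hj1lt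
      have hne : g (j+1) ≠ g j := by
        intro hEq
        rw [e1, e2] at hEq
        have e3 : (j + 1 : ℕ) = j :=
          congrArg Fin.val (σ.injective (Fin.ext hEq : σ ⟨j+1, hj1lt⟩ = σ ⟨j, hjlt⟩))
        omega
      have hA1 := hone j (by omega)
      have hA2 := hone (j+1) (by omega)
      by_contra hlt
      exact cross ⟨j, hjlt⟩ ⟨j+1, hj1lt⟩ (show j < j + 1 by omega)
        (show j + 1 < (σ ⟨j, hjlt⟩).val by rw [← e1]; omega)
        (show (σ ⟨j, hjlt⟩).val < (σ ⟨j+1, hj1lt⟩).val by rw [← e1, ← e2]; omega)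
    have hc1 := chain_low g (m-2) (m+1) hmono (hone (m-2) le_rfl)
    have hc2 : g 0 ≤ 2*m - 1 := by
      rw [hgval 0 (by omega)]
      have := (σ ⟨0, by omega⟩).2
      omega
    have hc3 := chain_high g (m-2) (2*m-1) hmono hc2
    have hval : ∀ j, j ≤ m - 2 → ∀ (h : j < 2*m), (σ ⟨j, h⟩).val = 2*m - 1 - j := by
      intro j hj h
      have u1 := hc1 j hj
      have u2 := hc3 j hj
      rw [hgval j h] at u1 u2
      omega
    intro k
    rcases Nat.lt_or_ge k.val (m-1) with hk | hk
    · exact hval k.val (by omega) k.2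
    · rcases Nat.lt_or_ge k.val (m+1) with hk2 | hk2
      · -- k = m-1 or k = m
        rcases Nat.lt_or_ge k.val m with hk3 | hk3
        · have ek : k = ⟨m-1, hb1⟩ := Fin.ext (show (k:ℕ) = m - 1 by omega)
          rw [ek, eA]
          exact (show (m : ℕ) = 2*m - 1 - (m-1) by omega)
        · have ek : k = ⟨m, hb3⟩ := Fin.ext (show (k:ℕ) = m by omega)
          rw [ek, eA']
          exact (show (m - 1 : ℕ) = 2*m - 1 - m by omega)
      · -- k ≥ m+1 : use involution
        have hjlt : 2*m - 1 - k.val < 2*m := by omega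
        have e1 : σ ⟨2*m - 1 - k.val, hjlt⟩ = k := by
          apply Fin.ext
          rw [hval (2*m - 1 - k.val) (by omega) hjlt]
          omega
        have e2 : σ k = ⟨2*m - 1 - k.val, hjlt⟩ := by
          have e3 := congrArg σ e1
          rw [hinv] at e3
          exact e3.symm
        rw [e2]
  · -- CASE B
    right
    have hBa : (σ ⟨m-1, hb1⟩).val ≤ m - 2 := by omega
    -- Step B1: σ (m-1) = m-2
    have hB1 : (σ ⟨m-1, hb1⟩).val = m - 2 := by
      by_contra hne
      have hlt : (σ ⟨m-1, hb1⟩).val < m - 2 := by omega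
      have hb := hbitN (m-2) hb2
      have hcne : (σ ⟨m-2, hb2⟩).val ≠ m - 1 := by
        intro hEq
        have e1 : σ ⟨m-2, hb2⟩ = ⟨m-1, hb1⟩ := Fin.ext hEq
        have e2 := congrArg σ e1
        rw [hinv] at e2
        have e3 : (m - 2 : ℕ) = (σ ⟨m-1, hb1⟩).val := congrArg Fin.val e2
        omega
      have hcge : m + 1 ≤ (σ ⟨m-2, hb2⟩).val := by omega
      have eσa : (σ (σ ⟨m-1, hb1⟩)).val = m - 1 := by rw [hinv]
      exact cross (σ ⟨m-1, hb1⟩) ⟨m-2, hb2⟩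
        (show (σ ⟨m-1, hb1⟩).val < m - 2 by omega)
        (show m - 2 < (σ (σ ⟨m-1, hb1⟩)).val by omega)
        (show (σ (σ ⟨m-1, hb1⟩)).val < (σ ⟨m-2, hb2⟩).val by omega)
    have eB : σ ⟨m-1, hb1⟩ = ⟨m-2, hb2⟩ := Fin.ext hB1
    have eB' : σ ⟨m-2, hb2⟩ = ⟨m-1, hb1⟩ := by rw [← eB, hinv]
    -- Step B2: σ m = m+1
    have hMb := hbitN m hb3
    have hMne : (σ ⟨m, hb3⟩).val ≠ m - 1 := by
      intro hEq
      have e1 : σ ⟨m, hb3⟩ = ⟨m-1, hb1⟩ := Fin.ext hEq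
      rw [← eB'] at e1
      have e3 : (m : ℕ) = m - 2 := congrArg Fin.val (σ.injective e1)
      omega
    have hMge : m + 1 ≤ (σ ⟨m, hb3⟩).val := by omega
    have hB2 : (σ ⟨m, hb3⟩).val = m + 1 := by
      by_contra hne
      have hlt : m + 1 < (σ ⟨m, hb3⟩).val := by omega
      have hb := hbitN (m+1) hb4
      have hple : ¬((σ ⟨m+1, hb4⟩).val = m-1 ∨ m+1 ≤ (σ ⟨m+1, hb4⟩).val) := by
        rw [hb]; omega
      push_neg at hple
      obtain ⟨hp1, hp2⟩ := hple
      have hpne : (σ ⟨m+1, hb4⟩).val ≠ m - 2 := by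
        intro hEq
        have e1 : σ ⟨m+1, hb4⟩ = ⟨m-2, hb2⟩ := Fin.ext hEq
        rw [← eB] at e1
        have e3 : (m + 1 : ℕ) = m - 1 := congrArg Fin.val (σ.injective e1)
        omega
      have hpnem : (σ ⟨m+1, hb4⟩).val ≠ m := by
        intro hEq
        have e1 : σ ⟨m+1, hb4⟩ = ⟨m, hb3⟩ := Fin.ext hEq
        have e2 := congrArg σ e1
        rw [hinv] at e2
        have e3 : (m + 1 : ℕ) = (σ ⟨m, hb3⟩).val := congrArg Fin.val e2
        omega
      have hple2 : (σ ⟨m+1, hb4⟩).val ≤ m - 2 := by omega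
      have eσa : (σ (σ ⟨m+1, hb4⟩)).val = m + 1 := by rw [hinv]
      exact cross (σ ⟨m+1, hb4⟩) ⟨m, hb3⟩
        (show (σ ⟨m+1, hb4⟩).val < m by omega)
        (show m < (σ (σ ⟨m+1, hb4⟩)).val by omega)
        (show (σ (σ ⟨m+1, hb4⟩)).val < (σ ⟨m, hb3⟩).val by omega)
    have eC : σ ⟨m, hb3⟩ = ⟨m+1, hb4⟩ := Fin.ext hB2
    have eC' : σ ⟨m+1, hb4⟩ = ⟨m, hb3⟩ := by rw [← eC, hinv]
    refine ⟨hB1, hB2, ?_⟩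
    -- outer rainbow
    set g : ℕ → ℕ := fun j => if h : j < 2*m then (σ ⟨j, h⟩).val else 0 with hg
    have hgval : ∀ j (h : j < 2*m), g j = (σ ⟨j, h⟩).val := by
      intro j h; rw [hg]; simp [h]
    have hone : ∀ j, j + 3 ≤ m → m + 2 ≤ g j := by
      intro j hj
      have hjlt : j < 2*m := by omega
      rw [hgval j hjlt]
      have hb := hbitN j hjlt
      have hne1 : (σ ⟨j, hjlt⟩).val ≠ m - 1 := by
        intro hEq
        have e1 : σ ⟨j, hjlt⟩ = ⟨m-1, hb1⟩ := Fin.ext hEq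
        rw [← eB'] at e1
        have e3 : (j : ℕ) = m - 2 := congrArg Fin.val (σ.injective e1)
        omega
      have hne2 : (σ ⟨j, hjlt⟩).val ≠ m + 1 := by
        intro hEq
        have e1 : σ ⟨j, hjlt⟩ = ⟨m+1, hb4⟩ := Fin.ext hEq
        rw [← eC] at e1
        have e3 : (j : ℕ) = m := congrArg Fin.val (σ.injective e1)
        omega
      omega
    intro k hk
    have hm3 : 3 ≤ m := by omega
    have hmono : ∀ j, j < m - 3 → g (j+1) < g j := by
      intro j hj
      have hjlt : j < 2*m := by omega
      have hj1lt : j + 1 < 2*m := by omega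
      have e1 := hgval j hjlt
      have e2 := hgval (j+1) hj1lt
      have hne : g (j+1) ≠ g j := by
        intro hEq
        rw [e1, e2] at hEq
        have e3 : (j + 1 : ℕ) = j :=
          congrArg Fin.val (σ.injective (Fin.ext hEq : σ ⟨j+1, hj1lt⟩ = σ ⟨j, hjlt⟩))
        omega
      have hA1 := hone j (by omega)
      have hA2 := hone (j+1) (by omega)
      by_contra hlt
      exact cross ⟨j, hjlt⟩ ⟨j+1, hj1lt⟩ (show j < j + 1 by omega)
        (show j + 1 < (σ ⟨j, hjlt⟩).val by rw [← e1]; omega)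
        (show (σ ⟨j, hjlt⟩).val < (σ ⟨j+1, hj1lt⟩).val by rw [← e1, ← e2]; omega)
    have hc1 := chain_low g (m-3) (m+2) hmono (hone (m-3) (by omega))
    have hc2 : g 0 ≤ 2*m - 1 := by
      rw [hgval 0 (by omega)]
      have := (σ ⟨0, by omega⟩).2
      omega
    have hc3 := chain_high g (m-3) (2*m-1) hmono hc2
    have u1 := hc1 k.val (by omega)
    have u2 := hc3 k.val (by omega)
    rw [hgval k.val k.2] at u1 u2
    have u3 : (σ ⟨k.val, k.2⟩).val = (σ k).val := by rw [Fin.eta]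
    omega

/-- For `n = 2m` with `m` even (and positive), with
`Î = 0^{m-1} 1 0 1^{m-1}`, there are exactly two noncrossing perfect
matchings of `{1,…,n}` all of whose blocks join a 0-position of `Î`
to a 1-position of `Î`. -/
theorem two_matchings_for_Ihat (m : ℕ) (hm : Even m) (hm0 : 0 < m)
    (Ihat : Fin (2 * m) → Bool)
    (hI : ∀ k : Fin (2 * m),
      Ihat k = decide ((k : ℕ) = m - 1 ∨ m + 1 ≤ (k : ℕ))) :
    ∃ σ₀ σ₁ : Equiv.Perm (Fin (2 * m)), σ₀ ≠ σ₁ ∧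
      ∀ σ : Equiv.Perm (Fin (2 * m)),
        (isMatching σ ∧ noncross σ ∧ ∀ k, Ihat (σ k) = !(Ihat k)) ↔
          (σ = σ₀ ∨ σ = σ₁) := by
  have h2 : 2 ≤ m := by obtain ⟨t, ht⟩ := hm; omega
  refine ⟨mperm0 m h2, mperm1 m h2, ?_, ?_⟩
  · intro h
    have hb1 : m - 1 < 2*m := by omega
    have hv : (mperm0 m h2 ⟨m-1, hb1⟩).val = (mperm1 m h2 ⟨m-1, hb1⟩).val :=
      congrArg (fun τ : Equiv.Perm (Fin (2*m)) => (τ ⟨m-1, hb1⟩).val) h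
    have hv' : mv0 m (m-1) = mv1 m (m-1) := hv
    unfold mv0 mv1 at hv'
    split_ifs at hv' <;> omega
  · intro σ
    constructor
    · rintro ⟨⟨hfix, hinv⟩, hnc, hbit⟩
      have hb1 : m - 1 < 2*m := by omega
      have hb2 : m - 2 < 2*m := by omega
      have hb3 : m < 2*m := by omega
      have hb4 : m + 1 < 2*m := by omega
      rcases forced m h2 Ihat hI σ hfix hinv hnc hbit with hA | ⟨hB1, hB2, hOut⟩
      · left
        apply Equiv.ext; intro k
        apply Fin.ext
        rw [mperm0_val, hA]
        unfold mv0; rfl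
      · right
        have hB1' : (σ ⟨m-1, hb1⟩).val = m - 2 := hB1
        have hB2' : (σ ⟨m, hb3⟩).val = m + 1 := hB2
        have eB : σ ⟨m-1, hb1⟩ = ⟨m-2, hb2⟩ := Fin.ext hB1'
        have eB' : σ ⟨m-2, hb2⟩ = ⟨m-1, hb1⟩ := by rw [← eB, hinv]
        have eC : σ ⟨m, hb3⟩ = ⟨m+1, hb4⟩ := Fin.ext hB2'
        have eC' : σ ⟨m+1, hb4⟩ = ⟨m, hb3⟩ := by rw [← eC, hinv]
        apply Equiv.ext; intro k
        apply Fin.ext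
        rw [mperm1_val]
        have hklt := k.2
        by_cases c1 : k.val + 3 ≤ m
        · have hO := hOut k c1
          rw [hO]
          unfold mv1; split_ifs <;> omega
        · by_cases c2 : k.val = m - 2
          · have ek : k = ⟨m-2, hb2⟩ := Fin.ext c2
            rw [ek, eB']
            show (m - 1 : ℕ) = mv1 m (m - 2)
            unfold mv1; split_ifs <;> omega
          · by_cases c3 : k.val = m - 1
            · have ek : k = ⟨m-1, hb1⟩ := Fin.ext c3
              rw [ek, eB]
              show (m - 2 : ℕ) = mv1 m (m - 1)
              unfold mv1; split_ifs <;> omega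
            · by_cases c4 : k.val = m
              · have ek : k = ⟨m, hb3⟩ := Fin.ext c4
                rw [ek, eC]
                show (m + 1 : ℕ) = mv1 m m
                unfold mv1; split_ifs <;> omega
              · by_cases c5 : k.val = m + 1
                · have ek : k = ⟨m+1, hb4⟩ := Fin.ext c5
                  rw [ek, eC']
                  show (m : ℕ) = mv1 m (m + 1)
                  unfold mv1; split_ifs <;> omega
                · have hk6 : m + 2 ≤ k.val := by omega
                  have hjlt : 2*m - 1 - k.val < 2*m := by omega
                  have e0 : (σ ⟨2*m - 1 - k.val, hjlt⟩).val = 2*m - 1 - (2*m - 1 - k.val) :=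
                    hOut ⟨2*m - 1 - k.val, hjlt⟩ (show 2*m - 1 - k.val + 3 ≤ m by omega)
                  have e1 : σ ⟨2*m - 1 - k.val, hjlt⟩ = k :=
                    Fin.ext (show (σ ⟨2*m - 1 - k.val, hjlt⟩).val = k.val by omega)
                  have e2 : σ k = ⟨2*m - 1 - k.val, hjlt⟩ := by
                    have e3 := congrArg σ e1
                    rw [hinv] at e3
                    exact e3.symm
                  rw [e2]
                  show (2*m - 1 - k.val : ℕ) = mv1 m k.val
                  unfold mv1; split_ifs <;> omega
    · rintro (rfl | rfl)
      · exact mperm0_good m h2 Ihat hI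
      · exact mperm1_good m h2 Ihat hI
end
end

section
/- For n = 2m > 2, no nonzero linear combination of products of singlets over noncrossing perfect matchings of {1,...,n} is a symmetric state. That is, if |ψ⟩ = Σ_P c_P |s_P⟩ (sum over noncrossing perfect matchings P) is invariant under all permutations of the tensor factors, then all c_P = 0. -/
open Matrix BigOperators

noncomputable section

/-!
Every `|s_P⟩` is supported on words of weight `m`, and its coordinates sum to zero because it is
antisymmetric under exchanging the two sites of a block. A symmetric state is constant on weight
classes, so a symmetric state in the span is a multiple of the Dicke state `D_m` whose coordinate
sum vanishes, i.e. it is zero.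

The noncrossing `|s_P⟩` are linearly independent: the word `I_P` (0 on the opener, 1 on the closer
of each block) determines a noncrossing `P`, and `⟨I_P|s_Q⟩ ≠ 0` forces `Q = P` or
`moment I_P < moment I_Q`, where `moment w = ∑_{w k = 1} k - ∑_{w k = 0} k`, because `I_Q` is the
unique maximiser of `moment` among the words with one 0 and one 1 in each block of `Q`. So the
evaluation matrix is triangular.
-/

open Finset

variable {n : ℕ}

abbrev IsBalanced (σ : Equiv.Perm (Fin n)) (I : Fin n → Bool) : Prop := ∀ k, I (σ k) = !I k

section Matching

variable {σ : Equiv.Perm (Fin n)}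

lemma IP_eq_true_iff {k : Fin n} : IP σ k = true ↔ σ k < k := by
  simp [IP]

lemma IP_eq_false_iff (hσ : isMatching σ) {k : Fin n} : IP σ k = false ↔ k < σ k := by
  simp only [IP, decide_eq_false_iff_not, not_lt]
  exact ⟨fun h => lt_of_le_of_ne h (hσ.1 k).symm, le_of_lt⟩

lemma IP_apply_partner (hσ : isMatching σ) (k : Fin n) : IP σ (σ k) = !IP σ k := by
  simp only [IP, hσ.2]
  rcases (hσ.1 k).lt_or_gt with h | h <;> simp [h, h.not_gt]

lemma sum_eq_sum_filter_lt_apply_add {M : Type*} [AddCommMonoid M] (hσ : isMatching σ)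
    (f : Fin n → M) : ∑ k, f k = ∑ k ∈ univ.filter (fun k => k < σ k), (f k + f (σ k)) := by
  rw [sum_add_distrib, ← sum_filter_add_sum_filter_not univ (fun k => k < σ k) f]
  congr 1
  have himage : (univ.filter fun k => k < σ k).image σ = univ.filter fun k => ¬ k < σ k := by
    ext j
    simp only [mem_image, mem_filter, mem_univ, true_and]
    constructor
    · rintro ⟨k, hk, rfl⟩
      rw [hσ.2 k]
      exact lt_asymm hk
    · intro hj
      refine ⟨σ j, ?_, hσ.2 j⟩
      rw [hσ.2 j]
      exact lt_of_le_of_ne (not_lt.mp hj) (hσ.1 j)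
  rw [← himage, sum_image fun a _ b _ hab => σ.injective hab]

lemma balanced_of_sP_ne_zero {I : Fin n → Bool} (h : sP σ I ≠ 0) : IsBalanced σ I := by
  by_contra hI
  exact h (if_neg hI)

lemma IsBalanced.two_mul_wt_eq (hσ : isMatching σ) {I : Fin n → Bool} (hI : IsBalanced σ I) :
    2 * wt I = n := by
  have hwt : wt I = #(univ.filter fun k => ¬ I k = true) := by
    refine card_nbij' σ σ (fun k hk => ?_) (fun k hk => ?_) (fun k _ => hσ.2 k)
      (fun k _ => hσ.2 k) <;> simp_all
  have htotal := card_filter_add_card_filter_not (s := (univ : Finset (Fin n))) fun k => I k = true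
  rw [card_univ, Fintype.card_fin] at htotal
  unfold wt at hwt ⊢
  omega

lemma sP_eq_zero_of_two_mul_wt_ne (hσ : isMatching σ) {I : Fin n → Bool} (h : 2 * wt I ≠ n) :
    sP σ I = 0 :=
  if_neg fun hI => h (IsBalanced.two_mul_wt_eq hσ hI)

lemma sP_IP (hσ : isMatching σ) : sP σ (IP σ) = 1 := by
  rw [sP, if_pos (IP_apply_partner hσ)]
  refine prod_eq_one fun k hk => ?_
  rw [(IP_eq_false_iff hσ).2 (mem_filter.1 hk).2]
  rfl

end Matching

section Antisymmetry

variable {σ : Equiv.Perm (Fin n)}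

lemma commute_swap_partner (hσ : isMatching σ) (a : Fin n) :
    Commute (Equiv.swap a (σ a)) σ := by
  have h := Equiv.swap_apply_apply σ a (σ a)
  rw [hσ.2, Equiv.swap_comm] at h
  exact eq_mul_inv_iff_mul_eq.1 h

lemma IsBalanced.comp_swap (hσ : isMatching σ) (a : Fin n) {I : Fin n → Bool}
    (hI : IsBalanced σ I) : IsBalanced σ (I ∘ Equiv.swap a (σ a)) := fun k => by
  simp only [Function.comp_apply, ← Equiv.Perm.mul_apply, (commute_swap_partner hσ a).eq]
  exact hI _

lemma permAct_swap_sP (hσ : isMatching σ) {a : Fin n} (ha : a < σ a) :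
    permAct (Equiv.swap a (σ a)) (sP σ) = -sP σ := by
  funext I
  by_cases hI : IsBalanced σ I
  · have hmem : a ∈ univ.filter fun k => k < σ k := by simp [ha]
    simp only [permAct, Pi.neg_apply, sP, if_pos hI, if_pos (IsBalanced.comp_swap hσ a hI),
      ← mul_prod_erase _ _ hmem]
    have hrest : ∀ k ∈ (univ.filter fun k => k < σ k).erase a, Equiv.swap a (σ a) k = k := by
      intro k hk
      obtain ⟨hka, hk⟩ := mem_erase.1 hk
      refine Equiv.swap_apply_of_ne_of_ne hka fun hkσ => ?_
      rw [mem_filter, hkσ, hσ.2] at hk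
      exact lt_asymm ha hk.2
    rw [prod_congr rfl fun k hk => by rw [Function.comp_apply, hrest k hk]]
    simp only [Function.comp_apply, Equiv.swap_apply_left, hI]
    cases I a <;> simp
  · have hI' : ¬ IsBalanced σ (I ∘ Equiv.swap a (σ a)) := fun h => hI <| by
      simpa [Function.comp_def] using IsBalanced.comp_swap hσ a h
    simp only [permAct, Pi.neg_apply, sP, if_neg hI, if_neg hI', neg_zero]

lemma sum_permAct (π : Equiv.Perm (Fin n)) (ψ : QState n) :
    ∑ I, permAct π ψ I = ∑ I, ψ I :=
  Equiv.sum_comp (π.symm.arrowCongr (Equiv.refl Bool)) ψ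

lemma sum_sP_eq_zero (hσ : isMatching σ) (hn : 0 < n) : ∑ I, sP σ I = 0 := by
  obtain ⟨a, ha⟩ : ∃ a, a < σ a := by
    let k : Fin n := ⟨0, hn⟩
    rcases (hσ.1 k).lt_or_gt with h | h
    · exact ⟨σ k, by rwa [hσ.2]⟩
    · exact ⟨k, h⟩
  have h := sum_permAct (Equiv.swap a (σ a)) (sP σ)
  rw [permAct_swap_sP hσ ha] at h
  simpa [sum_neg_distrib, neg_eq_self] using h

end Antisymmetry

lemma exists_perm_comp_eq_of_wt_eq {I J : Fin n → Bool} (h : wt I = wt J) :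
    ∃ π : Equiv.Perm (Fin n), I ∘ π = J := by
  have hcard : Fintype.card {k // J k = true} = Fintype.card {k // I k = true} := by
    rw [Fintype.card_subtype, Fintype.card_subtype]
    exact h.symm
  set e := Fintype.equivOfCardEq hcard
  refine ⟨e.extendSubtype, funext fun k => ?_⟩
  by_cases hk : J k = true
  · rw [Function.comp_apply, e.extendSubtype_mem k hk, hk]
  · have hI := e.extendSubtype_not_mem k hk
    simp only [Bool.not_eq_true] at hI hk
    rw [Function.comp_apply, hI, hk]

lemma eq_zero_of_permAct_eq_self {ψ : QState n} (hsym : ∀ π, permAct π ψ = ψ) {k : ℕ}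
    (hsupp : ∀ I, wt I ≠ k → ψ I = 0) (hsum : ∑ I, ψ I = 0) : ψ = 0 := by
  funext I
  rw [Pi.zero_apply]
  by_cases hI : wt I = k
  swap
  · exact hsupp I hI
  have hψ : ∀ J, ψ J = (if wt J = k then 1 else 0) * ψ I := by
    intro J
    split_ifs with hJ
    · obtain ⟨π, hπ⟩ := exists_perm_comp_eq_of_wt_eq (hI.trans hJ.symm)
      rw [one_mul, ← hπ]
      exact congrFun (hsym π) I
    · rw [zero_mul, hsupp J hJ]
  rw [Fintype.sum_congr _ _ hψ, ← sum_mul, sum_boole] at hsum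
  have hcard : #(univ.filter fun J => wt J = k) ≠ 0 :=
    card_ne_zero_of_mem (a := I) (by simpa using hI)
  exact (mul_eq_zero.1 hsum).resolve_left (Nat.cast_ne_zero.2 hcard)

section Combination

variable {c : Equiv.Perm (Fin n) → ℂ}

lemma sum_smul_sP_apply_eq_zero_of_two_mul_wt_ne (hc : ∀ σ, c σ ≠ 0 → isMatching σ)
    {I : Fin n → Bool} (hI : 2 * wt I ≠ n) : (∑ σ, c σ • sP σ) I = 0 := by
  simp only [Finset.sum_apply, Pi.smul_apply, smul_eq_mul]
  refine sum_eq_zero fun σ _ => ?_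
  by_cases h : c σ = 0
  · rw [h, zero_mul]
  · rw [sP_eq_zero_of_two_mul_wt_ne (hc σ h) hI, mul_zero]

lemma sum_sum_smul_sP_apply_eq_zero (hc : ∀ σ, c σ ≠ 0 → isMatching σ) (hn : 0 < n) :
    ∑ I, (∑ σ, c σ • sP σ) I = 0 := by
  simp only [Finset.sum_apply, Pi.smul_apply, smul_eq_mul]
  rw [sum_comm]
  refine sum_eq_zero fun σ _ => ?_
  rw [← mul_sum]
  by_cases h : c σ = 0
  · rw [h, zero_mul]
  · rw [sum_sP_eq_zero (hc σ h) hn, mul_zero]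

end Combination

section Noncrossing

variable {σ τ : Equiv.Perm (Fin n)}

/-! In a noncrossing matching the partner of an opener `i` is the first `j > i` at which the closers
in `(i, j]` outnumber the openers, so the word `IP σ` determines `σ`. -/

lemma card_IP_true_le_card_IP_false (hσ : isMatching σ) (hnc : noncross σ) {i j : Fin n}
    (hj : j < σ i) :
    #((Ioc i j).filter (IP σ · = true)) ≤ #((Ioc i j).filter (IP σ · = false)) := by
  refine card_le_card_of_injOn σ (fun k hk => ?_) σ.injective.injOn
  simp only [coe_filter, Set.mem_ofPred_eq, mem_Ioc] at hk ⊢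
  obtain ⟨⟨hik, hkj⟩, hk⟩ := hk
  have hσk : σ k < k := IP_eq_true_iff.1 hk
  have hiσk : i < σ k := by
    rcases lt_trichotomy i (σ k) with h | h | h
    · exact h
    · rw [h, hσ.2] at hj
      exact absurd (hkj.trans_lt hj) (lt_irrefl k)
    · exact absurd ⟨σ k, i, h, by rwa [hσ.2], by rw [hσ.2]; exact hkj.trans_lt hj⟩ hnc
  rw [IP_apply_partner hσ, hk]
  exact ⟨⟨hiσk, (hσk.trans_le hkj).le⟩, rfl⟩

lemma card_IP_false_lt_card_IP_true (hσ : isMatching σ) (hnc : noncross σ) {i : Fin n}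
    (hi : i < σ i) :
    #((Ioc i (σ i)).filter (IP σ · = false)) < #((Ioc i (σ i)).filter (IP σ · = true)) := by
  have hclose : IP σ (σ i) = true := by
    rw [IP_apply_partner hσ, (IP_eq_false_iff hσ).2 hi]
    rfl
  calc #((Ioc i (σ i)).filter (IP σ · = false))
      ≤ #(((Ioc i (σ i)).filter (IP σ · = true)).erase (σ i)) := by
        refine card_le_card_of_injOn σ (fun k hk => ?_) σ.injective.injOn
        simp only [coe_filter, Set.mem_ofPred_eq, mem_Ioc, coe_erase, Set.mem_sdiff,
          Set.mem_singleton_iff] at hk ⊢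
        obtain ⟨⟨hik, hki⟩, hk⟩ := hk
        have hkσk : k < σ k := (IP_eq_false_iff hσ).1 hk
        have hkσi : k < σ i := lt_of_le_of_ne hki fun h => by rw [h, hclose] at hk; cases hk
        have hσkσi : σ k < σ i := by
          refine lt_of_le_of_ne (not_lt.1 fun h => hnc ⟨i, k, hik, hkσi, h⟩) fun h => ?_
          exact (ne_of_lt hik) (σ.injective h).symm
        rw [IP_apply_partner hσ, hk]
        exact ⟨⟨⟨hik.trans hkσk, hσkσi.le⟩, rfl⟩, hσkσi.ne⟩
    _ < #((Ioc i (σ i)).filter (IP σ · = true)) :=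
        card_erase_lt_of_mem (mem_filter.2 ⟨mem_Ioc.2 ⟨hi, le_rfl⟩, hclose⟩)

lemma apply_le_of_IP_eq (hσ : isMatching σ) (hncσ : noncross σ) (hτ : isMatching τ)
    (hncτ : noncross τ) (h : IP σ = IP τ) {i : Fin n} (hi : i < σ i) : τ i ≤ σ i := by
  refine not_lt.1 fun hlt => (card_IP_false_lt_card_IP_true hσ hncσ hi).not_ge ?_
  rw [h]
  exact card_IP_true_le_card_IP_false hτ hncτ hlt

lemma eq_of_IP_eq (hσ : isMatching σ) (hncσ : noncross σ) (hτ : isMatching τ)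
    (hncτ : noncross τ) (h : IP σ = IP τ) : σ = τ := by
  have hopen : ∀ i, i < σ i → σ i = τ i := fun i hi => by
    have hiτ : i < τ i := (IP_eq_false_iff hτ).1 (h ▸ (IP_eq_false_iff hσ).2 hi)
    exact le_antisymm (apply_le_of_IP_eq hτ hncτ hσ hncσ h.symm hiτ)
      (apply_le_of_IP_eq hσ hncσ hτ hncτ h hi)
  refine Equiv.ext fun k => ?_
  rcases (hσ.1 k).lt_or_gt with hk | hk
  · have h' := hopen (σ k) (by rwa [hσ.2])
    rw [hσ.2] at h'
    exact ((congrArg τ h').trans (hτ.2 _)).symm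
  · exact hopen k hk

end Noncrossing

def moment (w : Fin n → Bool) : ℤ :=
  ∑ k, if w k then (k.val : ℤ) else -(k.val : ℤ)

section Triangularity

variable {σ τ : Equiv.Perm (Fin n)}

lemma moment_lt_moment_IP (hτ : isMatching τ) {w : Fin n → Bool} (hw : IsBalanced τ w)
    (hne : w ≠ IP τ) : moment w < moment (IP τ) := by
  obtain ⟨k, hk, hwk⟩ : ∃ k, k < τ k ∧ w k = true := by
    by_contra! hopen
    refine hne (funext fun k => ?_)
    rcases (hτ.1 k).lt_or_gt with h | h
    · have hwk := hw (τ k)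
      rw [hτ.2] at hwk
      rw [hwk, Bool.eq_false_iff.2 (hopen (τ k) (by rwa [hτ.2])), IP_eq_true_iff.2 h]
      rfl
    · rw [Bool.eq_false_iff.2 (hopen k h), (IP_eq_false_iff hτ).2 h]
  rw [moment, moment, sum_eq_sum_filter_lt_apply_add hτ, sum_eq_sum_filter_lt_apply_add hτ]
  refine sum_lt_sum (fun j hj => ?_) ⟨k, mem_filter.2 ⟨mem_univ k, hk⟩, ?_⟩
  · have hj : j < τ j := (mem_filter.1 hj).2
    have hj' : (j.val : ℤ) < (τ j).val := by exact_mod_cast hj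
    rw [hw, IP_apply_partner hτ, (IP_eq_false_iff hτ).2 hj]
    cases w j <;>
      simp only [Bool.not_false, Bool.not_true, Bool.false_eq_true, ↓reduceIte] <;> omega
  · have hk' : (k.val : ℤ) < (τ k).val := by exact_mod_cast hk
    rw [hw, IP_apply_partner hτ, (IP_eq_false_iff hτ).2 hk, hwk]
    simp only [Bool.not_false, Bool.not_true, Bool.false_eq_true, ↓reduceIte]
    omega

lemma moment_IP_lt_of_sP_IP_ne_zero (hσ : isMatching σ ∧ noncross σ)
    (hτ : isMatching τ ∧ noncross τ) (hne : σ ≠ τ) (h : sP σ (IP τ) ≠ 0) :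
    moment (IP τ) < moment (IP σ) :=
  moment_lt_moment_IP hσ.1 (balanced_of_sP_ne_zero h)
    fun heq => hne (eq_of_IP_eq hσ.1 hσ.2 hτ.1 hτ.2 heq.symm)

end Triangularity

theorem linearIndependent_sP :
    LinearIndependent ℂ
      fun σ : {σ : Equiv.Perm (Fin n) // isMatching σ ∧ noncross σ} => sP σ.1 := by
  classical
  refine Fintype.linearIndependent_iff.2 fun g hg => ?_
  by_contra! hg0
  obtain ⟨τ, hτ, hmax⟩ := (univ.filter (g · ≠ 0)).exists_max_image (fun σ => moment (IP σ.1))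
    (by obtain ⟨σ, hσ⟩ := hg0; exact ⟨σ, by simpa using hσ⟩)
  have hoff : ∀ σ, σ ≠ τ → g σ * sP σ.1 (IP τ.1) = 0 := by
    intro σ hστ
    by_contra hσ
    obtain ⟨hgσ, hsσ⟩ := mul_ne_zero_iff.1 hσ
    exact (hmax σ (by simpa using hgσ)).not_gt
      (moment_IP_lt_of_sP_IP_ne_zero σ.2 τ.2 (Subtype.coe_ne_coe.2 hστ) hsσ)
  have heval := congrFun hg (IP τ.1)
  simp only [Finset.sum_apply, Pi.smul_apply, smul_eq_mul, Pi.zero_apply] at heval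
  rw [sum_eq_single τ (fun σ _ => hoff σ) (by simp), sP_IP τ.2.1, mul_one] at heval
  exact (by simpa using hτ : g τ ≠ 0) heval

/-- For `n = 2m > 2`, no nonzero linear combination of singlet
products over noncrossing perfect matchings is symmetric: if
`ψ = ∑_P c_P |s_P⟩` is invariant under all permutations of the tensor
factors, then all `c_P = 0`. -/
theorem no_symmetric_cdc (m : ℕ) (hm : 1 < m)
    (c : Equiv.Perm (Fin (2 * m)) → ℂ)
    (hc : ∀ σ, ¬(isMatching σ ∧ noncross σ) → c σ = 0)
    (ψ : QState (2 * m))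
    (hψ : ψ = ∑ σ : Equiv.Perm (Fin (2 * m)), c σ • sP σ)
    (hsym : ∀ π : Equiv.Perm (Fin (2 * m)), permAct π ψ = ψ) :
    ∀ σ, c σ = 0 := by
  classical
  have hsupp : ∀ σ, c σ ≠ 0 → isMatching σ ∧ noncross σ := fun σ => not_imp_comm.1 (hc σ)
  have hψ0 : ψ = 0 := by
    refine eq_zero_of_permAct_eq_self hsym (k := m) (fun I hI => ?_) ?_ <;> rw [hψ]
    · exact sum_smul_sP_apply_eq_zero_of_two_mul_wt_ne (fun σ h => (hsupp σ h).1) (by omega)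
    · exact sum_sum_smul_sP_apply_eq_zero (fun σ h => (hsupp σ h).1) (by omega)
  have hsum : ∑ σ : {σ // isMatching σ ∧ noncross σ}, c σ.1 • sP σ.1 = 0 := by
    rw [← sum_subtype (univ.filter fun σ => isMatching σ ∧ noncross σ) (by simp)
      fun σ => c σ • sP σ, sum_filter_of_ne fun σ _ h => hsupp σ (left_ne_zero_of_smul h),
      ← hψ, hψ0]
  intro σ
  by_cases h : isMatching σ ∧ noncross σ
  · exact Fintype.linearIndependent_iff.1 linearIndependent_sP _ hsum ⟨σ, h⟩
  · exact hc σ h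
end
end
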